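/- The space H = {(c, e, h) ∈ ℝ⁷ : c · e = 0, 2h‖c‖² − κ⁴(‖e‖² − 1) = 0} (κ > 0 fixed) is not homeomorphic to any finite-dimensional real topological vector space. -/

import Mathlib

/-!
The slice `{h = -1}` of bound orbits is compact, while the rectilinear orbits `(0, e, h)` with
`‖e‖ = 1` realise every energy, so removing the slice leaves the two pieces `{h < -1}` and
`{h > -1}`, neither relatively compact: `Hall κ` has at least two ends. A real vector space of
dimension at least two has at most one end, since the complement of a large ball is connected.
In dimension at most one the argument is different: the orbits `(0, e, 0)` form a 2-sphere, and a
2-sphere does not inject continuously into `ℝ`, because removing one point keeps it connected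
while removing an interior point of an interval disconnects it.
-/

noncomputable abbrev E3 := EuclideanSpace ℝ (Fin 3)

/-- The space of all Keplerian orbits, as a subspace of ℝ⁷. -/
def Hall (κ : ℝ) : Set (E3 × E3 × ℝ) :=
  {x | inner ℝ x.1 x.2.1 = (0 : ℝ) ∧ 2 * x.2.2 * ‖x.1‖ ^ 2 - κ ^ 4 * (‖x.2.1‖ ^ 2 - 1) = 0}

open Metric Set Filter Function Module Bornology

theorem IsPreconnected.subsingleton_of_injOn {X α : Type*} [TopologicalSpace X] [LinearOrder α]
    [DenselyOrdered α] [TopologicalSpace α] [OrderClosedTopology α] {S : Set X} {f : X → α}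
    (hS : IsPreconnected S) (hS_diff : ∀ p ∈ S, IsPreconnected (S \ {p}))
    (hf : ContinuousOn f S) (hf_inj : InjOn f S) : S.Subsingleton := by
  intro a ha b hb
  by_contra hab
  wlog hlt : f a < f b generalizing a b
  · exact this hb ha (Ne.symm hab) ((hf_inj.ne ha hb hab).symm.lt_of_le (not_lt.1 hlt))
  obtain ⟨m, ham, hmb⟩ := exists_between hlt
  obtain ⟨p, hp, rfl⟩ := hS.intermediate_value ha hb hf ⟨ham.le, hmb.le⟩
  have ha' : a ∈ S \ {p} := ⟨ha, fun h ↦ ham.ne (congrArg f h)⟩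
  have hb' : b ∈ S \ {p} := ⟨hb, fun h ↦ hmb.ne' (congrArg f h)⟩
  obtain ⟨q, ⟨hq, hqp⟩, hfq⟩ :=
    (hS_diff p hp).intermediate_value ha' hb' (hf.mono sdiff_subset) ⟨ham.le, hmb.le⟩
  exact hqp (hf_inj hq hp hfq)

section Sphere

variable {E : Type*} [NormedAddCommGroup E] [InnerProductSpace ℝ E]

theorem isConnected_sphere_compl_singleton {n : ℕ} [Fact (finrank ℝ E = n + 1)]
    (v : sphere (0 : E) 1) : IsConnected ({v}ᶜ : Set (sphere (0 : E) 1)) := by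
  have h : IsConnected ((stereographic' n v).symm '' (stereographic' n v).target) :=
    (stereographic'_target (n := n) v ▸ isConnected_univ).image _
      (stereographic' n v).continuousOn_symm
  rwa [(stereographic' n v).symm_image_target_eq_source, stereographic'_source] at h

theorem not_injective_of_continuous_sphere {α : Type*} [LinearOrder α] [DenselyOrdered α]
    [TopologicalSpace α] [OrderClosedTopology α] {n : ℕ} [Fact (finrank ℝ E = n + 1)]
    (hn : 0 < n) {f : sphere (0 : E) 1 → α} (hf : Continuous f) : ¬ Injective f := by
  intro hf_inj
  have hE : 1 < Module.rank ℝ E := by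
    apply one_lt_rank_of_one_lt_finrank
    rw [Fact.out (p := finrank ℝ E = n + 1)]
    omega
  have := isConnected_iff_connectedSpace.1 (isConnected_sphere hE (0 : E) zero_le_one)
  obtain ⟨v⟩ := this.toNonempty
  have hsub : (univ : Set (sphere (0 : E) 1)).Subsingleton :=
    isPreconnected_univ.subsingleton_of_injOn
      (fun p _ ↦ by
        simpa [← compl_eq_univ_sdiff] using
          (isConnected_sphere_compl_singleton (n := n) p).isPreconnected)
      hf.continuousOn hf_inj.injOn
  exact ne_neg_of_mem_unit_sphere ℝ v (hsub trivial trivial)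

end Sphere

def AtMostOneEnd (X : Type*) [TopologicalSpace X] : Prop :=
  ∀ U W : Set X, IsOpen U → IsOpen W → Disjoint U W → U ∪ W ∈ cocompact X →
    Uᶜ ∈ cocompact X ∨ Wᶜ ∈ cocompact X

theorem AtMostOneEnd.of_homeomorph {X Y : Type*} [TopologicalSpace X] [TopologicalSpace Y]
    (hY : AtMostOneEnd Y) (e : X ≃ₜ Y) : AtMostOneEnd X := by
  have mem_iff (s : Set X) : s ∈ cocompact X ↔ e '' s ∈ cocompact Y := by
    rw [← e.map_cocompact, mem_map, e.preimage_image]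
  intro U W hU hW hUW hcover
  simp only [mem_iff, image_compl_eq e.bijective, image_union] at hcover ⊢
  exact hY _ _ (e.isOpenMap U hU) (e.isOpenMap W hW) ((disjoint_image_iff e.injective).2 hUW)
    hcover

theorem compl_notMem_cocompact_of_not_isBounded_image {X α : Type*} [TopologicalSpace X]
    [PseudoMetricSpace α] {f : X → α} (hf : Continuous f) {U : Set X}
    (hU : ¬ IsBounded (f '' U)) : Uᶜ ∉ cocompact X := by
  rw [mem_cocompact', compl_compl]
  rintro ⟨K, hK, hUK⟩
  exact hU ((hK.image hf).isBounded.subset (image_mono hUK))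

section NormedSpace

variable {E : Type*} [NormedAddCommGroup E] [NormedSpace ℝ E]

theorem isConnected_compl_closedBall (hE : 1 < Module.rank ℝ E) {R : ℝ} (hR : 0 ≤ R) :
    IsConnected (closedBall (0 : E) R)ᶜ := by
  have hrays : (closedBall (0 : E) R)ᶜ = (fun p : ℝ × E ↦ p.1 • p.2) '' (Ioi R ×ˢ sphere 0 1) := by
    ext x
    simp only [mem_compl_iff, mem_closedBall_zero_iff, not_le, mem_image, mem_prod, mem_Ioi,
      mem_sphere_zero_iff_norm, Prod.exists]
    constructor
    · intro hx
      have hx0 : x ≠ 0 := norm_pos_iff.1 (hR.trans_lt hx)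
      exact ⟨‖x‖, ‖x‖⁻¹ • x, ⟨hx, norm_smul_inv_norm hx0⟩,
        smul_inv_smul₀ (norm_ne_zero_iff.2 hx0) x⟩
    · rintro ⟨t, v, ⟨ht, hv⟩, rfl⟩
      rwa [norm_smul, hv, mul_one, Real.norm_of_nonneg (hR.trans ht.le)]
  rw [hrays]
  exact (isConnected_Ioi.prod (isConnected_sphere hE 0 zero_le_one)).image _
    (continuous_fst.smul continuous_snd).continuousOn

theorem atMostOneEnd_of_one_lt_rank [ProperSpace E] (hE : 1 < Module.rank ℝ E) :
    AtMostOneEnd E := by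
  intro U W hU hW hUW hcover
  obtain ⟨K, hK, hKUW⟩ := mem_cocompact.1 hcover
  obtain ⟨R, hR, hKR⟩ := hK.isBounded.subset_closedBall_lt 0 0
  have hcompl : (closedBall (0 : E) R)ᶜ ⊆ U ∪ W := (compl_subset_compl.2 hKR).trans hKUW
  refine ((isConnected_compl_closedBall hE hR.le).isPreconnected.subset_or_subset
    hU hW hUW hcompl).symm.imp (fun hW' ↦ ?_) (fun hU' ↦ ?_) <;>
    refine mem_cocompact.2 ⟨_, isCompact_closedBall 0 R, ?_⟩
  · exact hW'.trans hUW.subset_compl_left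
  · exact hU'.trans hUW.subset_compl_right

end NormedSpace

namespace Hall

variable {κ : ℝ}

theorem isClosed (κ : ℝ) : IsClosed (Hall κ) :=
  (isClosed_eq (by fun_prop) continuous_const).inter (isClosed_eq (by fun_prop) continuous_const)

def energy (x : Hall κ) : ℝ := (x : E3 × E3 × ℝ).2.2

theorem continuous_energy : Continuous (energy (κ := κ)) :=
  continuous_subtype_val.snd.snd

/-- The rectilinear orbits: angular momentum `c = 0` and `‖e‖ = 1`. -/
def collisionOrbit (κ h : ℝ) (e : sphere (0 : E3) 1) : Hall κ :=
  ⟨(0, e, h), by simp [Hall, norm_eq_of_mem_sphere e]⟩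

theorem continuous_collisionOrbit (κ h : ℝ) : Continuous (collisionOrbit κ h) :=
  (continuous_const.prodMk (continuous_subtype_val.prodMk continuous_const)).subtype_mk _

theorem injective_collisionOrbit (κ h : ℝ) : Injective (collisionOrbit κ h) :=
  fun _ _ heq ↦ Subtype.ext (congrArg (fun x : Hall κ ↦ (x : E3 × E3 × ℝ).2.1) heq)

theorem surjective_energy : Surjective (energy (κ := κ)) := by
  obtain ⟨e⟩ :=
    (NormedSpace.sphere_nonempty.2 zero_le_one : (sphere (0 : E3) 1).Nonempty).to_subtype
  exact fun h ↦ ⟨collisionOrbit κ h e, rfl⟩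

/-- For `h < 0`, `2 h ‖c‖² = κ⁴ (‖e‖² - 1)` forces `‖e‖ ≤ 1` and `-2 h ‖c‖² ≤ κ⁴`. -/
theorem isCompact_energy_preimage_singleton (hκ : κ ≠ 0) {h : ℝ} (hh : h < 0) :
    IsCompact (energy ⁻¹' {h} : Set (Hall κ)) := by
  have hbox : IsCompact (Subtype.val ⁻¹'
      (closedBall (0 : E3) √(κ ^ 4 / (-2 * h)) ×ˢ closedBall (0 : E3) 1 ×ˢ {h}) : Set (Hall κ)) :=
    (isClosed κ).isClosedEmbedding_subtypeVal.isCompact_preimage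
      ((isCompact_closedBall _ _).prod ((isCompact_closedBall _ _).prod isCompact_singleton))
  refine hbox.of_isClosed_subset (isClosed_singleton.preimage continuous_energy) ?_
  rintro ⟨⟨c, e, t⟩, -, hx⟩ (rfl : t = h)
  simp only [mem_preimage, mem_prod, mem_closedBall_zero_iff, mem_singleton_iff,
    and_true] at hx ⊢
  have hκ4 : 0 < κ ^ 4 := by positivity
  constructor
  · rw [Real.le_sqrt (norm_nonneg _) (div_nonneg hκ4.le (by linarith)), le_div_iff₀ (by linarith)]
    nlinarith [sq_nonneg ‖e‖]
  · rw [← sq_le_one_iff₀ (norm_nonneg _)]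
    nlinarith [sq_nonneg ‖c‖]

theorem not_atMostOneEnd (hκ : κ ≠ 0) : ¬ AtMostOneEnd (Hall κ) := by
  intro hends
  have hcover : energy ⁻¹' Iio (-1) ∪ energy ⁻¹' Ioi (-1) ∈ cocompact (Hall κ) := by
    rw [← preimage_union, Iio_union_Ioi, preimage_compl]
    exact mem_cocompact.2 ⟨_, isCompact_energy_preimage_singleton hκ (by norm_num), subset_rfl⟩
  rcases hends _ _ (isOpen_Iio.preimage continuous_energy) (isOpen_Ioi.preimage continuous_energy)
    (Ioi_disjoint_Iio_same.symm.preimage _) hcover with hU | hW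
  · refine compl_notMem_cocompact_of_not_isBounded_image continuous_energy ?_ hU
    rw [image_preimage_eq _ surjective_energy]
    exact fun hb ↦ not_bddBelow_Iio _ hb.bddBelow
  · refine compl_notMem_cocompact_of_not_isBounded_image continuous_energy ?_ hW
    rw [image_preimage_eq _ surjective_energy]
    exact fun hb ↦ not_bddAbove_Ioi _ hb.bddAbove

end Hall

theorem exists_continuous_injective_real_of_finrank_le_one (V : Type*) [AddCommGroup V]
    [Module ℝ V] [FiniteDimensional ℝ V] [TopologicalSpace V] [IsTopologicalAddGroup V]
    [ContinuousSMul ℝ V] [T2Space V]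
    (hV : finrank ℝ V ≤ 1) : ∃ g : V → ℝ, Continuous g ∧ Injective g := by
  interval_cases h : finrank ℝ V
  · have : Subsingleton V := finrank_zero_iff.1 h
    exact ⟨0, continuous_const, fun _ _ _ ↦ Subsingleton.elim _ _⟩
  · let g : V ≃L[ℝ] ℝ := .ofFinrankEq (by rw [h, finrank_self])
    exact ⟨g, g.continuous, g.injective⟩

theorem stmt11 (κ : ℝ) (hκ : 0 < κ)
    (V : Type*) [AddCommGroup V] [Module ℝ V] [FiniteDimensional ℝ V]
    [TopologicalSpace V] [IsTopologicalAddGroup V] [ContinuousSMul ℝ V] [T2Space V] :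
    ¬ Nonempty (Hall κ ≃ₜ V) := by
  rintro ⟨f⟩
  rcases le_or_gt (finrank ℝ V) 1 with hV | hV
  · obtain ⟨g, hg, hg_inj⟩ := exists_continuous_injective_real_of_finrank_le_one V hV
    have : Fact (finrank ℝ E3 = 2 + 1) := ⟨finrank_euclideanSpace_fin⟩
    exact not_injective_of_continuous_sphere (E := E3) two_pos
      (hg.comp (f.continuous.comp (Hall.continuous_collisionOrbit κ 0)))
      (hg_inj.comp (f.injective.comp (Hall.injective_collisionOrbit κ 0)))
  · let g : V ≃L[ℝ] EuclideanSpace ℝ (Fin (finrank ℝ V)) := .ofFinrankEq (by simp)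
    have hrank : 1 < Module.rank ℝ (EuclideanSpace ℝ (Fin (finrank ℝ V))) := by
      simpa [← finrank_eq_rank] using hV
    exact Hall.not_atMostOneEnd hκ.ne'
      ((atMostOneEnd_of_one_lt_rank hrank).of_homeomorph (f.trans g.toHomeomorph))
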